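/- arXiv:1312.7765 — 2 statements merged into one kernel-verified Lean document; each statement's English description precedes it below -/
import Mathlib

section
/- Let (C, N) be a regular multi-pointed category with N-kernels, where C is the regular completion of its projective cover P. If every internal reflexive graph in (P, N_P) satisfies (∗π₀), then (C, N) is star-regular. -/
open CategoryTheory CategoryTheory.Limits

universe v u

variable {C : Type u} [Category.{v} C]

/-- A class of morphisms of a category. -/
abbrev MorClass (C : Type u) [Category.{v} C] :=
  ∀ ⦃X Y : C⦄, (X ⟶ Y) → Prop

/-- An ideal of morphisms: closed under pre- and post-composition with arbitrary morphisms. -/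
def IsMorIdeal (N : MorClass C) : Prop :=
  (∀ ⦃X Y Z : C⦄ (f : X ⟶ Y) (g : Y ⟶ Z), N g → N (f ≫ g)) ∧
  (∀ ⦃X Y Z : C⦄ (f : X ⟶ Y) (g : Y ⟶ Z), N f → N (f ≫ g))

/-- `k` is a weak `N`-kernel of `f`. -/
def IsWeakKernel (N : MorClass C) {K X Y : C} (f : X ⟶ Y) (k : K ⟶ X) : Prop :=
  N (k ≫ f) ∧ ∀ ⦃K' : C⦄ (k' : K' ⟶ X), N (k' ≫ f) → ∃ u : K' ⟶ K, u ≫ k = k'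

/-- `k` is an `N`-kernel of `f` (unique factorization). -/
def IsNKernel (N : MorClass C) {K X Y : C} (f : X ⟶ Y) (k : K ⟶ X) : Prop :=
  N (k ≫ f) ∧ ∀ ⦃K' : C⦄ (k' : K' ⟶ X), N (k' ≫ f) → ∃! u : K' ⟶ K, u ≫ k = k'

def HasWeakKernels (N : MorClass C) : Prop :=
  ∀ ⦃X Y : C⦄ (f : X ⟶ Y), ∃ (K : C) (k : K ⟶ X), IsWeakKernel N f k

def HasNKernels (N : MorClass C) : Prop :=
  ∀ ⦃X Y : C⦄ (f : X ⟶ Y), ∃ (K : C) (k : K ⟶ X), IsNKernel N f k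

/-- The condition (∗π₀) for a pair of parallel morphisms: for a weak `N`-kernel `k` of `f₁`
and any morphism `g`, `g f₁ k = g f₂ k ⟺ g f₁ = g f₂`. -/
def StarPi0 (N : MorClass C) {X Y : C} (f₁ f₂ : X ⟶ Y) : Prop :=
  ∀ ⦃K : C⦄ (k : K ⟶ X), IsWeakKernel N f₁ k →
    ∀ ⦃Z : C⦄ (g : Y ⟶ Z), (k ≫ f₁ ≫ g = k ≫ f₂ ≫ g ↔ f₁ ≫ g = f₂ ≫ g)

/-- `(u, v)` is a weak kernel pair of `f`. -/
def IsWeakKernelPair {P X Y : C} (f : X ⟶ Y) (u v : P ⟶ X) : Prop :=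
  u ≫ f = v ≫ f ∧ ∀ ⦃Q : C⦄ (u' v' : Q ⟶ X), u' ≫ f = v' ≫ f →
    ∃ w : Q ⟶ P, w ≫ u = u' ∧ w ≫ v = v'

/-- `(u, v)` is the kernel pair of `f`. -/
def IsKernelPairOf {P X Y : C} (f : X ⟶ Y) (u v : P ⟶ X) : Prop :=
  u ≫ f = v ≫ f ∧ ∀ ⦃Q : C⦄ (u' v' : Q ⟶ X), u' ≫ f = v' ≫ f →
    ∃! w : Q ⟶ P, w ≫ u = u' ∧ w ≫ v = v'

def HasWeakKernelPairs (C : Type u) [Category.{v} C] : Prop :=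
  ∀ ⦃X Y : C⦄ (f : X ⟶ Y), ∃ (P : C) (u v : P ⟶ X), IsWeakKernelPair f u v

def HasKernelPairs (C : Type u) [Category.{v} C] : Prop :=
  ∀ ⦃X Y : C⦄ (f : X ⟶ Y), ∃ (P : C) (u v : P ⟶ X), IsKernelPairOf f u v

/-- `f` is a coequalizer of the pair `(u, v)`. -/
def IsCoequalizerOf {P X Y : C} (u v : P ⟶ X) (f : X ⟶ Y) : Prop :=
  u ≫ f = v ≫ f ∧ ∀ ⦃Z : C⦄ (g : X ⟶ Z), u ≫ g = v ≫ g → ∃! h : Y ⟶ Z, f ≫ h = g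

/-- `f` is a regular epimorphism: a coequalizer of some pair. -/
def IsRegEpi {X Y : C} (f : X ⟶ Y) : Prop :=
  ∃ (P : C) (u v : P ⟶ X), IsCoequalizerOf u v f

/-- `(p₁, p₂)` is a pullback of `(f, g)`. -/
def IsPullbackSq {P X Y Z : C} (p₁ : P ⟶ X) (p₂ : P ⟶ Y) (f : X ⟶ Z) (g : Y ⟶ Z) : Prop :=
  p₁ ≫ f = p₂ ≫ g ∧ ∀ ⦃Q : C⦄ (q₁ : Q ⟶ X) (q₂ : Q ⟶ Y), q₁ ≫ f = q₂ ≫ g →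
    ∃! w : Q ⟶ P, w ≫ p₁ = q₁ ∧ w ≫ p₂ = q₂

/-- A regular category: finitely complete, kernel pairs have coequalizers, and
regular epimorphisms are stable under pullback. -/
structure IsRegularCat (C : Type u) [Category.{v} C] : Prop where
  hasFiniteLimits : HasFiniteLimits C
  coeqOfKernelPairs : ∀ ⦃P X Y : C⦄ (f : X ⟶ Y) (u v : P ⟶ X), IsKernelPairOf f u v →
    ∃ (Q : C) (q : X ⟶ Q), IsCoequalizerOf u v q
  regEpiStable : ∀ ⦃P X Y Z : C⦄ (p₁ : P ⟶ X) (p₂ : P ⟶ Y) (f : X ⟶ Z) (g : Y ⟶ Z),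
    IsPullbackSq p₁ p₂ f g → IsRegEpi g → IsRegEpi p₁

/-- `P` (a class of objects, regarded as a full subcategory) is a projective cover of `C`. -/
structure IsProjectiveCover (P : Set C) : Prop where
  proj : ∀ ⦃X : C⦄, X ∈ P → ∀ ⦃A B : C⦄ (e : A ⟶ B), IsRegEpi e →
    ∀ f : X ⟶ B, ∃ g : X ⟶ A, g ≫ e = f
  covers : ∀ X : C, ∃ (Q : C) (_ : Q ∈ P) (e : Q ⟶ X), IsRegEpi e

/-- An ideal of the full subcategory on `P`, encoded as a class of morphisms of `C`
supported on `P`-objects and closed under composition with `P`-morphisms. -/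
def IsMorIdealOn (P : Set C) (N : MorClass C) : Prop :=
  (∀ ⦃X Y : C⦄ (f : X ⟶ Y), N f → X ∈ P ∧ Y ∈ P) ∧
  (∀ ⦃X Y Z : C⦄ (f : X ⟶ Y) (g : Y ⟶ Z), X ∈ P → N g → N (f ≫ g)) ∧
  (∀ ⦃X Y Z : C⦄ (f : X ⟶ Y) (g : Y ⟶ Z), Z ∈ P → N f → N (f ≫ g))

/-- The extension `N^C` of an ideal `N` of the full subcategory `P` to `C`. -/
def extClass (P : Set C) (N : MorClass C) : MorClass C := fun X Y f =>
  ∃ (A B : C) (_ : A ∈ P) (_ : B ∈ P) (n : A ⟶ B) (e : A ⟶ X) (e' : B ⟶ Y),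
    IsRegEpi e ∧ IsRegEpi e' ∧ N n ∧ e ≫ f = n ≫ e'

/-- The restriction `M_P` of an ideal `M` of `C` to the full subcategory `P`. -/
def restClass (P : Set C) (M : MorClass C) : MorClass C := fun X Y f =>
  X ∈ P ∧ Y ∈ P ∧ M f

/-- `k` is a weak `N`-kernel of `f` computed in the full subcategory `P`. -/
def IsWeakKernelOn (P : Set C) (N : MorClass C) {K X Y : C} (f : X ⟶ Y) (k : K ⟶ X) : Prop :=
  K ∈ P ∧ N (k ≫ f) ∧ ∀ ⦃K' : C⦄, K' ∈ P → ∀ k' : K' ⟶ X, N (k' ≫ f) →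
    ∃ u : K' ⟶ K, u ≫ k = k'

def HasWeakKernelsOn (P : Set C) (N : MorClass C) : Prop :=
  ∀ ⦃X Y : C⦄, X ∈ P → Y ∈ P → ∀ f : X ⟶ Y, ∃ (K : C) (k : K ⟶ X), IsWeakKernelOn P N f k

/-- The condition (∗π₀) interpreted in the full subcategory `P`. -/
def StarPi0On (P : Set C) (N : MorClass C) {X Y : C} (f₁ f₂ : X ⟶ Y) : Prop :=
  ∀ ⦃K : C⦄ (k : K ⟶ X), IsWeakKernelOn P N f₁ k →
    ∀ ⦃Z : C⦄, Z ∈ P → ∀ g : Y ⟶ Z, (k ≫ f₁ ≫ g = k ≫ f₂ ≫ g ↔ f₁ ≫ g = f₂ ≫ g)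

/-- Every internal reflexive graph of `C` satisfies (∗π₀). -/
def ReflGraphsStarPi0 (N : MorClass C) : Prop :=
  ∀ ⦃G₁ G₀ : C⦄ (d c : G₁ ⟶ G₀) (e : G₀ ⟶ G₁), e ≫ d = 𝟙 G₀ → e ≫ c = 𝟙 G₀ →
    StarPi0 N d c

/-- Every internal reflexive graph of the full subcategory `P` satisfies (∗π₀). -/
def ReflGraphsStarPi0On (P : Set C) (N : MorClass C) : Prop :=
  ∀ ⦃G₁ G₀ : C⦄, G₁ ∈ P → G₀ ∈ P → ∀ (d c : G₁ ⟶ G₀) (e : G₀ ⟶ G₁),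
    e ≫ d = 𝟙 G₀ → e ≫ c = 𝟙 G₀ → StarPi0On P N d c

/-- Every regular epimorphism is a coequalizer of its kernel star (star-regularity condition). -/
def RegEpisCoeqOfKernelStar (N : MorClass C) : Prop :=
  ∀ ⦃X Y : C⦄ (f : X ⟶ Y), IsRegEpi f →
    ∀ ⦃P : C⦄ (u v : P ⟶ X), IsKernelPairOf f u v →
      ∀ ⦃K : C⦄ (k : K ⟶ P), IsNKernel N u k →
        IsCoequalizerOf (k ≫ u) (k ≫ v) f

/-- `f` is `N`-saturating. -/
def IsSaturating (N : MorClass C) {P' Y : C} (f : P' ⟶ Y) : Prop :=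
  ∀ ⦃X : C⦄ (n : X ⟶ Y), N n →
    ∃ (Z : C) (g : Z ⟶ X) (m : Z ⟶ P'), IsRegEpi g ∧ N m ∧ m ≫ f = g ≫ n

/-- `C` is a regular completion of `P`: `P` is a projective cover and every object of `C`
admits a monomorphism into a finite product of `P`-objects (expressed via a jointly monic
finite family). -/
def IsRegularCompletionOf (P : Set C) : Prop :=
  IsProjectiveCover P ∧
    ∀ X : C, ∃ (n : ℕ) (obj : Fin n → C) (_ : ∀ i, obj i ∈ P) (m : ∀ i, X ⟶ obj i),
      ∀ ⦃W : C⦄ (a b : W ⟶ X), (∀ i, a ≫ m i = b ≫ m i) → a = b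

/-- `C` is pointed via the ideal `N` of null morphisms. -/
def IsPointedVia (N : MorClass C) : Prop :=
  IsMorIdeal N ∧ ∀ X Y : C, ∃! f : X ⟶ Y, N f

/-- The full subcategory `P` is pointed via the ideal `N` of null morphisms. -/
def IsPointedOn (P : Set C) (N : MorClass C) : Prop :=
  IsMorIdealOn P N ∧ ∀ ⦃X Y : C⦄, X ∈ P → Y ∈ P → ∃! f : X ⟶ Y, N f

/-- `f` is a normal epimorphism (a cokernel) with respect to the ideal `N`. -/
def IsNormalEpi (N : MorClass C) {X Y : C} (f : X ⟶ Y) : Prop :=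
  ∃ (A : C) (h : A ⟶ X), N (h ≫ f) ∧
    ∀ ⦃Z : C⦄ (g : X ⟶ Z), N (h ≫ g) → ∃! t : Y ⟶ Z, f ≫ t = g

/-!
A regular epimorphism `f` is the coequalizer of any pair factoring through its kernel pair
`(u, v)`, so star-regularity reduces to `u ≫ g = v ≫ g` whenever `k ≫ u ≫ g = k ≫ v ≫ g`:
this is (∗π₀) for the reflexive graph `(u, v)`. To get (∗π₀) for a reflexive graph of `C`,
test against each leg of a jointly monic family into `P`-objects, and cover the graph by a
reflexive graph of `P` (pull back along a projective cover, then cover again). The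
epimorphic cover maps a weak `N_P`-kernel of the covering graph into the `N`-kernel `k`,
so the hypothesis in `P` transports back along it.
-/

section

variable {N : MorClass C} {P : Set C}

lemma IsRegEpi.epi {X Y : C} {f : X ⟶ Y} (hf : IsRegEpi f) : Epi f := by
  obtain ⟨_, u, v, huv, hcoeq⟩ := hf
  refine ⟨fun {Z} a b hab => ?_⟩
  obtain ⟨_, -, huniq⟩ := hcoeq (f ≫ a) (by rw [reassoc_of% huv])
  exact (huniq a rfl).trans (huniq b hab.symm).symm

lemma IsNKernel.isWeakKernel {K X Y : C} {f : X ⟶ Y} {k : K ⟶ X}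
    (hk : IsNKernel N f k) : IsWeakKernel N f k :=
  ⟨hk.1, fun _ k' hk' => (hk.2 k' hk').exists⟩

lemma HasNKernels.hasWeakKernels (hk : HasNKernels N) : HasWeakKernels N :=
  fun _ _ f => by
    obtain ⟨K, k, hkk⟩ := hk f
    exact ⟨K, k, hkk.isWeakKernel⟩

lemma CategoryTheory.IsPullback.isPullbackSq {W X Y Z : C} {p₁ : W ⟶ X} {p₂ : W ⟶ Y}
    {f : X ⟶ Z} {g : Y ⟶ Z} (h : IsPullback p₁ p₂ f g) : IsPullbackSq p₁ p₂ f g :=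
  ⟨h.w, fun _ q₁ q₂ hq => ⟨h.lift q₁ q₂ hq, ⟨h.lift_fst _ _ _, h.lift_snd _ _ _⟩,
    fun _ ⟨h₁, h₂⟩ => h.hom_ext (by simp [h₁]) (by simp [h₂])⟩⟩

lemma IsRegularCat.isRegEpi_fst_of_isPullback (hC : IsRegularCat C) {W X Y Z : C}
    {p₁ : W ⟶ X} {p₂ : W ⟶ Y} {f : X ⟶ Z} {g : Y ⟶ Z} (h : IsPullback p₁ p₂ f g)
    (hg : IsRegEpi g) : IsRegEpi p₁ :=
  hC.regEpiStable p₁ p₂ f g h.isPullbackSq hg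

/-- `H` is the pullback of `e₀` first along `d`, then along `c`; its section comes from `e`. -/
lemma IsRegularCat.exists_reflGraph_pullback (hC : IsRegularCat C) {G₁ G₀ X : C}
    (d c : G₁ ⟶ G₀) (e : G₀ ⟶ G₁) (hed : e ≫ d = 𝟙 G₀) (hec : e ≫ c = 𝟙 G₀)
    {e₀ : X ⟶ G₀} (he₀ : IsRegEpi e₀) :
    ∃ (H : C) (d' c' : H ⟶ X) (s : X ⟶ H) (e₁ : H ⟶ G₁), s ≫ d' = 𝟙 X ∧ s ≫ c' = 𝟙 X ∧
      Epi e₁ ∧ e₁ ≫ d = d' ≫ e₀ ∧ e₁ ≫ c = c' ≫ e₀ := by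
  have := hC.hasFiniteLimits
  have := (hC.isRegEpi_fst_of_isPullback (IsPullback.of_hasPullback d e₀) he₀).epi
  have := (hC.isRegEpi_fst_of_isPullback
    (IsPullback.of_hasPullback (pullback.fst d e₀ ≫ c) e₀) he₀).epi
  obtain ⟨a, ha₁, ha₂⟩ : ∃ a : X ⟶ pullback d e₀,
      a ≫ pullback.fst d e₀ = e₀ ≫ e ∧ a ≫ pullback.snd d e₀ = 𝟙 X :=
    ⟨pullback.lift _ _ (by simp [hed]), pullback.lift_fst _ _ _, pullback.lift_snd _ _ _⟩
  obtain ⟨s, hs₁, hs₂⟩ : ∃ s : X ⟶ pullback (pullback.fst d e₀ ≫ c) e₀,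
      s ≫ pullback.fst _ _ = a ∧ s ≫ pullback.snd _ _ = 𝟙 X :=
    ⟨pullback.lift a (𝟙 X) (by simp [reassoc_of% ha₁, hec]),
      pullback.lift_fst _ _ _, pullback.lift_snd _ _ _⟩
  refine ⟨_, pullback.fst _ _ ≫ pullback.snd d e₀, pullback.snd _ _, s,
    pullback.fst _ _ ≫ pullback.fst d e₀, by rw [reassoc_of% hs₁, ha₂], hs₂, epi_comp _ _,
    by simp [pullback.condition], by simpa using pullback.condition (f := _ ≫ c) (g := e₀)⟩

lemma IsProjectiveCover.exists_reflGraph_cover (hC : IsRegularCat C)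
    (hP : IsProjectiveCover P) {G₁ G₀ : C} (d c : G₁ ⟶ G₀) (e : G₀ ⟶ G₁)
    (hed : e ≫ d = 𝟙 G₀) (hec : e ≫ c = 𝟙 G₀) :
    ∃ (P₁ P₀ : C) (_ : P₁ ∈ P) (_ : P₀ ∈ P) (d' c' : P₁ ⟶ P₀) (s : P₀ ⟶ P₁) (e₁ : P₁ ⟶ G₁)
      (e₀ : P₀ ⟶ G₀), s ≫ d' = 𝟙 P₀ ∧ s ≫ c' = 𝟙 P₀ ∧
      Epi e₁ ∧ e₁ ≫ d = d' ≫ e₀ ∧ e₁ ≫ c = c' ≫ e₀ := by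
  obtain ⟨P₀, hP₀, e₀, he₀⟩ := hP.covers G₀
  obtain ⟨H, d', c', s, e₁, hsd', hsc', he₁, hd, hc⟩ :=
    hC.exists_reflGraph_pullback d c e hed hec he₀
  obtain ⟨P₁, hP₁, r, hr⟩ := hP.covers H
  obtain ⟨t, ht⟩ := hP.proj hP₀ r hr s
  have := hr.epi
  exact ⟨P₁, P₀, hP₁, hP₀, r ≫ d', r ≫ c', t, r ≫ e₁, e₀, by rw [reassoc_of% ht, hsd'],
    by rw [reassoc_of% ht, hsc'], epi_comp _ _, by simp [hd], by simp [hc]⟩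

/-- Covering a weak `N`-kernel by an object of `P` gives a weak `N_P`-kernel. -/
lemma IsProjectiveCover.exists_isWeakKernelOn (hP : IsProjectiveCover P) (hN : IsMorIdeal N)
    (hk : HasWeakKernels N) {X Y : C} (hY : Y ∈ P) (f : X ⟶ Y) :
    ∃ (K : C) (k : K ⟶ X), IsWeakKernelOn P (restClass P N) f k := by
  obtain ⟨L, κ, hκ, hκuniv⟩ := hk f
  obtain ⟨K, hK, ρ, hρ⟩ := hP.covers L
  refine ⟨K, ρ ≫ κ, hK, ⟨hK, hY, by simpa using hN.1 ρ _ hκ⟩, fun K' hK' k' hk' => ?_⟩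
  obtain ⟨w, hw⟩ := hκuniv k' hk'.2.2
  obtain ⟨w', hw'⟩ := hP.proj hK' ρ hρ w
  exact ⟨w', by rw [← Category.assoc, hw', hw]⟩

lemma ReflGraphsStarPi0On.comp_eq_comp_of_mem (h : ReflGraphsStarPi0On P (restClass P N))
    (hC : IsRegularCat C) (hN : IsMorIdeal N) (hk : HasWeakKernels N)
    (hP : IsProjectiveCover P) {G₁ G₀ : C} {d c : G₁ ⟶ G₀} {e : G₀ ⟶ G₁}
    (hed : e ≫ d = 𝟙 G₀) (hec : e ≫ c = 𝟙 G₀) {K : C} {k : K ⟶ G₁}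
    (hkw : IsWeakKernel N d k) {Z : C} (hZ : Z ∈ P) {g : G₀ ⟶ Z}
    (hg : k ≫ d ≫ g = k ≫ c ≫ g) : d ≫ g = c ≫ g := by
  obtain ⟨P₁, P₀, hP₁, hP₀, d', c', s, e₁, e₀, hsd', hsc', he₁, hd, hc⟩ :=
    hP.exists_reflGraph_cover hC d c e hed hec
  obtain ⟨L, κ, hκ⟩ := hP.exists_isWeakKernelOn hN hk hP₀ d'
  obtain ⟨w, hw⟩ := hkw.2 (κ ≫ e₁) (by simpa [hd] using hN.2 _ e₀ hκ.2.1.2.2)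
  have hκg : κ ≫ d' ≫ e₀ ≫ g = κ ≫ c' ≫ e₀ ≫ g := by
    rw [← reassoc_of% hd, ← reassoc_of% hc, ← reassoc_of% hw, hg, reassoc_of% hw]
  have hP₀g : d' ≫ e₀ ≫ g = c' ≫ e₀ ≫ g :=
    (h hP₁ hP₀ d' c' s hsd' hsc' κ hκ hZ (e₀ ≫ g)).1 hκg
  rw [← cancel_epi e₁, reassoc_of% hd, reassoc_of% hc, hP₀g]

lemma ReflGraphsStarPi0On.reflGraphsStarPi0 (h : ReflGraphsStarPi0On P (restClass P N))
    (hC : IsRegularCat C) (hN : IsMorIdeal N) (hk : HasWeakKernels N)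
    (hP : IsRegularCompletionOf P) : ReflGraphsStarPi0 N := by
  intro G₁ G₀ d c e hed hec K k hkw Z g
  refine ⟨fun hg => ?_, fun hg => by rw [hg]⟩
  obtain ⟨n, obj, hobj, m, hm⟩ := hP.2 Z
  refine hm _ _ fun i => ?_
  simpa using h.comp_eq_comp_of_mem hC hN hk hP.1 hed hec hkw (hobj i) (g := g ≫ m i)
    (by simp [reassoc_of% hg])

lemma ReflGraphsStarPi0.regEpisCoeqOfKernelStar (h : ReflGraphsStarPi0 N) :
    RegEpisCoeqOfKernelStar N := by
  intro X Y f hf R u v hR K k hk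
  obtain ⟨e, ⟨heu, hev⟩, -⟩ := hR.2 (𝟙 X) (𝟙 X) rfl
  refine ⟨by simp [hR.1], fun Z g hg => ?_⟩
  have huv : u ≫ g = v ≫ g := (h u v e heu hev k hk.isWeakKernel g).1 (by simpa using hg)
  obtain ⟨_, a, b, hab, hcoeq⟩ := hf
  obtain ⟨_, ⟨rfl, rfl⟩, -⟩ := hR.2 a b hab
  exact hcoeq g (by simp [huv])

end

/-- Let (C, N) be a regular multi-pointed category with N-kernels, where C
is the regular completion of its projective cover P. If every internal reflexive graph in
(P, N_P) satisfies (∗π₀), then (C, N) is star-regular. -/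
theorem statement13 (hC : IsRegularCat C) (N : MorClass C) (hN : IsMorIdeal N)
    (hk : HasNKernels N) (P : Set C) (hP : IsRegularCompletionOf P)
    (h : ReflGraphsStarPi0On P (restClass P N)) :
    RegEpisCoeqOfKernelStar N :=
  (h.reflGraphsStarPi0 hC hN hk.hasWeakKernels hP).regEpisCoeqOfKernelStar
end

section
/- Let Ω = {d, 0} with d binary and 0 nullary, and let E consist of the single identity d(x,x) = 0. Then every free (Ω, E)-algebra satisfies the quasi-identity d(x,y) = 0 ⟹ x = y. -/
/-!
Adjoin to a `DAlg` `A` a fresh zero, and let `d x y` be the fresh zero when `x = y` and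
`d x y` computed in `A` otherwise. This algebra satisfies the quasi-identity by construction,
and forgetting the fresh zero is a homomorphism onto `A`. When `A` is free, the lift of the
generators into the new algebra composed with that projection is the identity of `A`, so the
lift is injective and the quasi-identity pulls back to `A`.
-/

/-- An (Ω, E)-algebra for Ω = {d, 0} (d binary, 0 nullary) and E = {d(x,x) = 0}. -/
class DAlg (A : Type) where
  d : A → A → A
  zero : A
  d_self : ∀ a : A, d a a = zero

namespace DAlg

def Lift (A : Type) : Type := Option A

variable {A : Type} [DAlg A]

def Lift.proj (x : Lift A) : A := Option.getD x zero

open Classical in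
noncomputable instance : DAlg (Lift A) where
  d x y := if x = y then none else some (d x.proj y.proj)
  zero := none
  d_self _ := if_pos rfl

theorem Lift.eq_of_d_eq_zero {x y : Lift A} (h : d x y = zero) : x = y := by
  by_contra hxy
  simp [d, hxy, zero] at h

theorem Lift.proj_d (x y : Lift A) : (d x y).proj = d x.proj y.proj := by
  by_cases hxy : x = y
  · subst hxy
    rw [d_self, d_self]
    rfl
  · simp [d, hxy, proj]

theorem Lift.proj_zero : (zero : Lift A).proj = zero := rfl

end DAlg

open DAlg in
/-- Every free (Ω, E)-algebra (i.e. any algebra A with a universal map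
ι : X → A) satisfies the quasi-identity d(x,y) = 0 ⟹ x = y. -/
theorem statement17 {X A : Type} [DAlg A] (ι : X → A)
    (hfree : ∀ (B : Type) [DAlg B] (f : X → B), ∃! h : A → B,
      (∀ a b : A, h (DAlg.d a b) = DAlg.d (h a) (h b)) ∧
        h DAlg.zero = DAlg.zero ∧ ∀ x : X, h (ι x) = f x) :
    ∀ a b : A, DAlg.d a b = DAlg.zero → a = b := by
  obtain ⟨f, ⟨hf_d, hf_zero, hf_ι⟩, -⟩ := hfree (Lift A) fun x => some (ι x)
  have proj_f : ∀ a, (f a).proj = a := by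
    obtain ⟨k, -, hk⟩ := hfree A ι
    have hproj_f : (fun a => (f a).proj) = k := hk _
      ⟨fun a b => by simp only [hf_d, Lift.proj_d], by simp only [hf_zero, Lift.proj_zero],
        fun x => by simp only [hf_ι]; rfl⟩
    have hid : (fun a => a) = k := hk _ ⟨fun _ _ => rfl, rfl, fun _ => rfl⟩
    exact congrFun (hproj_f.trans hid.symm)
  intro a b hab
  have hf_ab : f a = f b := Lift.eq_of_d_eq_zero (by rw [← hf_d, hab, hf_zero])
  rw [← proj_f a, ← proj_f b, hf_ab]
end
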